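/- Let n ≥ m ≥ k ≥ 1 and let A be an m × n nonnegative real matrix with entries at most c. Then ‖A‖_{F_k} ≤ (1 + √k)√(mn) · c / 2. -/

import Mathlib

open Finset

/-- Singular values (unsorted) of a complex matrix: square roots of eigenvalues of `A * Aᴴ`. -/
noncomputable def svalC {m n : ℕ} (A : Matrix (Fin m) (Fin n) ℂ) : Fin m → ℝ :=
  fun i => Real.sqrt ((Matrix.isHermitian_mul_conjTranspose_self A).eigenvalues i)

/-- Singular values of a complex matrix sorted in decreasing order. -/
noncomputable def svalCSorted {m n : ℕ} (A : Matrix (Fin m) (Fin n) ℂ) : Fin m → ℝ :=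
  svalC A ∘ ⇑(Tuple.sort (fun i => -(svalC A i)))

/-- Singular values (unsorted) of a real matrix. -/
noncomputable def svalR {m n : ℕ} (A : Matrix (Fin m) (Fin n) ℝ) : Fin m → ℝ :=
  fun i => Real.sqrt ((Matrix.isHermitian_mul_conjTranspose_self A).eigenvalues i)

/-- Singular values of a real matrix sorted in decreasing order. -/
noncomputable def svalRSorted {m n : ℕ} (A : Matrix (Fin m) (Fin n) ℝ) : Fin m → ℝ :=
  svalR A ∘ ⇑(Tuple.sort (fun i => -(svalR A i)))

/-- Ky Fan `k`-norm of a complex matrix: the sum of its `k` largest singular values. -/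
noncomputable def kyFanC {m n : ℕ} (A : Matrix (Fin m) (Fin n) ℂ) (k : ℕ) : ℝ :=
  ∑ i : Fin m, if (i : ℕ) < k then svalCSorted A i else 0

/-- Ky Fan `k`-norm of a real matrix. -/
noncomputable def kyFanR {m n : ℕ} (A : Matrix (Fin m) (Fin n) ℝ) (k : ℕ) : ℝ :=
  ∑ i : Fin m, if (i : ℕ) < k then svalRSorted A i else 0

/-- The adjacency matrix of a simple graph is Hermitian (over `ℝ`). -/
lemma adjHerm {n : ℕ} (G : SimpleGraph (Fin n)) [DecidableRel G.Adj] :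
    (G.adjMatrix ℝ).IsHermitian := by
  have h := G.isSymm_adjMatrix (α := ℝ)
  first
  | exact (Matrix.conjTranspose_eq_transpose_of_trivial _).trans h
  | simpa [Matrix.IsHermitian, Matrix.conjTranspose, Matrix.IsSymm, Matrix.transpose, Matrix.map, starRingEnd_apply, star_trivial] using h

/-- Singular values of a graph (unsorted). -/
noncomputable def gsval {n : ℕ} (G : SimpleGraph (Fin n)) [DecidableRel G.Adj] : Fin n → ℝ :=
  svalR (G.adjMatrix ℝ)

/-- Singular values of a graph sorted in decreasing order. -/
noncomputable def gsvalSorted {n : ℕ} (G : SimpleGraph (Fin n)) [DecidableRel G.Adj] : Fin n → ℝ :=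
  svalRSorted (G.adjMatrix ℝ)

/-- Eigenvalues of a graph sorted in decreasing order: `geigSorted G 0 = μ₁ ≥ ⋯ ≥ μₙ`. -/
noncomputable def geigSorted {n : ℕ} (G : SimpleGraph (Fin n)) [DecidableRel G.Adj] : Fin n → ℝ :=
  (adjHerm G).eigenvalues ∘ ⇑(Tuple.sort (fun i => -((adjHerm G).eigenvalues i)))

/-- Ky Fan `k`-norm of a graph. -/
noncomputable def kyFanG {n : ℕ} (G : SimpleGraph (Fin n)) [DecidableRel G.Adj] (k : ℕ) : ℝ :=
  kyFanR (G.adjMatrix ℝ) k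

/-! Let `B = cJ - 2A`, `J` the all-ones matrix, so that `|Bᵢⱼ| ≤ c` and `‖B‖_F ≤ c√(mn)`. If
`uᵢ, vᵢ` are orthonormal left and right singular vectors of the `k` largest singular values, then
`2σᵢ = 2⟪uᵢ, A vᵢ⟫ = c⟪uᵢ, 𝟙⟫⟪vᵢ, 𝟙⟫ - ⟪uᵢ, B vᵢ⟫`. Summing over `i`, Cauchy–Schwarz and Bessel's
inequality bound the first part by `c‖𝟙ₘ‖‖𝟙ₙ‖ = c√(mn)`, and the second by
`√k (∑ ‖B vᵢ‖²)^½ ≤ √k ‖B‖_F`, the last step being Bessel's inequality for the rows of `B`.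
-/

open Matrix
open scoped RealInnerProductSpace
open WithLp (toLp)

section InnerProductSpace

variable {ι E F : Type*} [NormedAddCommGroup E] [InnerProductSpace ℝ E]
  [NormedAddCommGroup F] [InnerProductSpace ℝ F]

theorem Orthonormal.sum_inner_sq_le {v : ι → E} (hv : Orthonormal ℝ v) (s : Finset ι) (x : E) :
    ∑ i ∈ s, ⟪v i, x⟫ ^ 2 ≤ ‖x‖ ^ 2 := by
  simpa only [Real.norm_eq_abs, sq_abs] using hv.sum_inner_products_le x

theorem Orthonormal.sqrt_sum_inner_sq_le {v : ι → E} (hv : Orthonormal ℝ v) (s : Finset ι)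
    (x : E) : √(∑ i ∈ s, ⟪v i, x⟫ ^ 2) ≤ ‖x‖ :=
  (Real.sqrt_le_sqrt (hv.sum_inner_sq_le s x)).trans_eq (Real.sqrt_sq (norm_nonneg x))

theorem Orthonormal.sum_inner_mul_inner_le {u : ι → E} {v : ι → F} (hu : Orthonormal ℝ u)
    (hv : Orthonormal ℝ v) (s : Finset ι) (x : E) (y : F) :
    ∑ i ∈ s, ⟪u i, x⟫ * ⟪v i, y⟫ ≤ ‖x‖ * ‖y‖ :=
  calc ∑ i ∈ s, ⟪u i, x⟫ * ⟪v i, y⟫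
      ≤ √(∑ i ∈ s, ⟪u i, x⟫ ^ 2) * √(∑ i ∈ s, ⟪v i, y⟫ ^ 2) :=
        Real.sum_mul_le_sqrt_mul_sqrt s _ _
    _ ≤ ‖x‖ * ‖y‖ := mul_le_mul (hu.sqrt_sum_inner_sq_le s x) (hv.sqrt_sum_inner_sq_le s y)
        (Real.sqrt_nonneg _) (norm_nonneg x)

theorem sum_inner_le_sqrt_card_mul_sqrt_sum_norm_sq {u w : ι → E} (hu : ∀ i, ‖u i‖ = 1)
    (s : Finset ι) : ∑ i ∈ s, ⟪u i, w i⟫ ≤ √(#s) * √(∑ i ∈ s, ‖w i‖ ^ 2) :=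
  calc ∑ i ∈ s, ⟪u i, w i⟫
      ≤ ∑ i ∈ s, 1 * ‖w i‖ :=
        sum_le_sum fun i _ => (real_inner_le_norm _ _).trans_eq (by rw [hu])
    _ ≤ √(∑ i ∈ s, 1 ^ 2) * √(∑ i ∈ s, ‖w i‖ ^ 2) := Real.sum_mul_le_sqrt_mul_sqrt s _ _
    _ = √(#s) * √(∑ i ∈ s, ‖w i‖ ^ 2) := by simp

variable [FiniteDimensional ℝ E] [FiniteDimensional ℝ F]

theorem LinearMap.orthonormal_inv_smul_adjoint {T : E →ₗ[ℝ] F} {u : ι → F} {σ : ι → ℝ}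
    (hu : Orthonormal ℝ u) (hσ : ∀ i, σ i ≠ 0) (hTu : ∀ i, T (T.adjoint (u i)) = σ i ^ 2 • u i) :
    Orthonormal ℝ fun i => (σ i)⁻¹ • T.adjoint (u i) := by
  classical
  rw [orthonormal_iff_ite] at hu ⊢
  intro i j
  rw [real_inner_smul_left, real_inner_smul_right, LinearMap.adjoint_inner_left, hTu,
    real_inner_smul_right, hu]
  split_ifs with hij
  · subst hij
    field_simp [hσ i]
  · simp

theorem LinearMap.inner_apply_inv_smul_adjoint {T : E →ₗ[ℝ] F} {x : F} {σ : ℝ} (hx : ‖x‖ = 1)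
    (hσ : σ ≠ 0) (hTx : T (T.adjoint x) = σ ^ 2 • x) : ⟪x, T (σ⁻¹ • T.adjoint x)⟫ = σ := by
  rw [map_smul, hTx, smul_smul, real_inner_smul_right, real_inner_self_eq_norm_sq, hx]
  field_simp

end InnerProductSpace

section Matrix

variable {ι m n : Type*} [Fintype m] [Fintype n]

theorem sum_sub_two_mul_sq_le {A : Matrix m n ℝ} {c : ℝ} (hA : ∀ p q, 0 ≤ A p q)
    (hc : ∀ p q, A p q ≤ c) :
    ∑ p, ∑ q, (c - 2 * A p q) ^ 2 ≤ Fintype.card m * Fintype.card n * c ^ 2 := by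
  calc ∑ p, ∑ q, (c - 2 * A p q) ^ 2 ≤ ∑ _p : m, ∑ _q : n, c ^ 2 := by
        refine sum_le_sum fun p _ => sum_le_sum fun q _ => ?_
        nlinarith [hA p q, hc p q]
    _ = Fintype.card m * Fintype.card n * c ^ 2 := by simp [mul_assoc]

variable [DecidableEq n]

theorem Orthonormal.sum_norm_toEuclideanLin_sq_le {v : ι → EuclideanSpace ℝ n}
    (hv : Orthonormal ℝ v) (s : Finset ι) (B : Matrix m n ℝ) :
    ∑ i ∈ s, ‖toEuclideanLin B (v i)‖ ^ 2 ≤ ∑ p, ∑ q, B p q ^ 2 := by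
  have hrows (x : EuclideanSpace ℝ n) :
      ‖toEuclideanLin B x‖ ^ 2 = ∑ p, ⟪x, toLp 2 (B p)⟫ ^ 2 := by
    simp [EuclideanSpace.real_norm_sq_eq, EuclideanSpace.inner_eq_star_dotProduct, mulVec,
      dotProduct]
  calc ∑ i ∈ s, ‖toEuclideanLin B (v i)‖ ^ 2
      = ∑ p, ∑ i ∈ s, ⟪v i, toLp 2 (B p)⟫ ^ 2 := by simp_rw [hrows]; exact sum_comm
    _ ≤ ∑ p, ‖toLp 2 (B p)‖ ^ 2 := sum_le_sum fun p _ => hv.sum_inner_sq_le s _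
    _ = ∑ p, ∑ q, B p q ^ 2 := by simp [EuclideanSpace.real_norm_sq_eq]

theorem two_mul_inner_toEuclideanLin_eq (A : Matrix m n ℝ) (c : ℝ) (x : EuclideanSpace ℝ m)
    (y : EuclideanSpace ℝ n) :
    2 * ⟪x, toEuclideanLin A y⟫ = ⟪x, c • toLp 2 (fun _ => 1)⟫ * ⟪y, toLp 2 (fun _ => 1)⟫
      - ⟪x, toEuclideanLin (of fun p q => c - 2 * A p q) y⟫ := by
  simp only [EuclideanSpace.inner_eq_star_dotProduct, toLpLin_apply, dotProduct, mulVec,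
    star_trivial, of_apply, WithLp.ofLp_smul, Pi.smul_apply, smul_eq_mul, mul_one, sum_mul, mul_sum]
  rw [sum_comm (γ := n), ← sum_sub_distrib]
  refine sum_congr rfl fun p _ => ?_
  rw [← sum_sub_distrib]
  exact sum_congr rfl fun q _ => by ring

theorem sum_inner_toEuclideanLin_le {u : ι → EuclideanSpace ℝ m} {v : ι → EuclideanSpace ℝ n}
    (hu : Orthonormal ℝ u) (hv : Orthonormal ℝ v) (s : Finset ι) (A : Matrix m n ℝ) (c : ℝ) :
    ∑ i ∈ s, ⟪u i, toEuclideanLin A (v i)⟫ ≤ (|c| * √(Fintype.card m * Fintype.card n)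
      + √(#s) * √(∑ p, ∑ q, (c - 2 * A p q) ^ 2)) / 2 := by
  set B : Matrix m n ℝ := of fun p q => c - 2 * A p q
  have hJ : ∑ i ∈ s, ⟪u i, c • toLp 2 (fun _ => 1)⟫ * ⟪v i, toLp 2 (fun _ => 1)⟫ ≤
      |c| * √(Fintype.card m * Fintype.card n) := by
    refine (hu.sum_inner_mul_inner_le hv s _ _).trans_eq ?_
    simp [norm_smul, EuclideanSpace.norm_eq, mul_assoc, Real.sqrt_mul]
  have hB : ∑ i ∈ s, -⟪u i, toEuclideanLin B (v i)⟫ ≤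
      √(#s) * √(∑ p, ∑ q, (c - 2 * A p q) ^ 2) :=
    calc ∑ i ∈ s, -⟪u i, toEuclideanLin B (v i)⟫
        = ∑ i ∈ s, ⟪u i, -toEuclideanLin B (v i)⟫ := by simp only [inner_neg_right]
      _ ≤ √(#s) * √(∑ i ∈ s, ‖toEuclideanLin B (v i)‖ ^ 2) := by
        simpa only [norm_neg] using sum_inner_le_sqrt_card_mul_sqrt_sum_norm_sq
          (w := fun i => -toEuclideanLin B (v i)) hu.1 s
      _ ≤ √(#s) * √(∑ p, ∑ q, (c - 2 * A p q) ^ 2) := by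
        gcongr
        exact hv.sum_norm_toEuclideanLin_sq_le s B
  calc ∑ i ∈ s, ⟪u i, toEuclideanLin A (v i)⟫
      = (∑ i ∈ s, ⟪u i, c • toLp 2 (fun _ => 1)⟫ * ⟪v i, toLp 2 (fun _ => 1)⟫
          + ∑ i ∈ s, -⟪u i, toEuclideanLin B (v i)⟫) / 2 := by
        rw [← sum_add_distrib, sum_div]
        refine sum_congr rfl fun i _ => ?_
        linarith [two_mul_inner_toEuclideanLin_eq A c (u i) (v i)]
    _ ≤ _ := by gcongr

end Matrix

section SingularValues

variable {m n : ℕ}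

theorem exists_orthonormal_inner_toEuclideanLin_eq_svalR (A : Matrix (Fin m) (Fin n) ℝ) :
    ∃ (u : {i // svalR A i ≠ 0} → EuclideanSpace ℝ (Fin m))
      (v : {i // svalR A i ≠ 0} → EuclideanSpace ℝ (Fin n)),
      Orthonormal ℝ u ∧ Orthonormal ℝ v ∧ ∀ i, ⟪u i, toEuclideanLin A (v i)⟫ = svalR A i := by
  set hAA := isHermitian_mul_conjTranspose_self A
  set T := toEuclideanLin A
  set u : {i // svalR A i ≠ 0} → EuclideanSpace ℝ (Fin m) := fun i => hAA.eigenvectorBasis i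
  have hu : Orthonormal ℝ u := hAA.eigenvectorBasis.orthonormal.comp _ Subtype.val_injective
  have hTu (i) : T (T.adjoint (u i)) = svalR A i ^ 2 • u i := by
    rw [svalR, Real.sq_sqrt (eigenvalues_self_mul_conjTranspose_nonneg A _),
      ← toEuclideanLin_conjTranspose_eq_adjoint, ← LinearMap.comp_apply, ← toLpLin_mul_same,
      toLpLin_apply, hAA.mulVec_eigenvectorBasis]
    rfl
  exact ⟨u, fun i => (svalR A i)⁻¹ • T.adjoint (u i),
    hu, T.orthonormal_inv_smul_adjoint hu (fun i => i.2) hTu,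
    fun i => T.inner_apply_inv_smul_adjoint (hu.1 i) i.2 (hTu i)⟩

theorem exists_card_le_kyFanR_eq_sum (A : Matrix (Fin m) (Fin n) ℝ) (k : ℕ) :
    ∃ s : Finset {i // svalR A i ≠ 0}, #s ≤ k ∧ kyFanR A k = ∑ i ∈ s, svalR A i := by
  classical
  set t := ({i : Fin m | (i : ℕ) < k} : Finset (Fin m)).map
    (Tuple.sort fun i => -svalR A i).toEmbedding
  refine ⟨t.subtype _, ?_, ?_⟩
  · rw [card_subtype]
    refine (card_filter_le _ _).trans ?_
    rw [card_map, Fin.card_filter_val_lt]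
    exact min_le_right m k
  · rw [sum_subtype_eq_sum_filter, sum_filter_ne_zero, sum_map, kyFanR, ← sum_filter]
    rfl

end SingularValues

theorem kyFan_le_nonneg_general {m n k : ℕ}
    (A : Matrix (Fin m) (Fin n) ℝ) (c : ℝ) (hA : ∀ i j, 0 ≤ A i j) (hc : ∀ i j, A i j ≤ c) :
    kyFanR A k ≤ (1 + Real.sqrt k) * Real.sqrt ((m : ℝ) * n) * c / 2 := by
  obtain ⟨s, hsk, hky⟩ := exists_card_le_kyFanR_eq_sum A k
  obtain ⟨u, v, hu, hv, huv⟩ := exists_orthonormal_inner_toEuclideanLin_eq_svalR A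
  have hB : √(∑ p, ∑ q, (c - 2 * A p q) ^ 2) ≤ √((m : ℝ) * n) * |c| := by
    calc √(∑ p, ∑ q, (c - 2 * A p q) ^ 2) ≤ √((m : ℝ) * n * c ^ 2) := by
          simpa using Real.sqrt_le_sqrt (sum_sub_two_mul_sq_le hA hc)
      _ = √((m : ℝ) * n) * |c| := by rw [Real.sqrt_mul (by positivity), Real.sqrt_sq_eq_abs]
  have habs : √((m : ℝ) * n) * |c| = √((m : ℝ) * n) * c := by
    rcases Nat.eq_zero_or_pos m with rfl | hm
    · simp
    rcases Nat.eq_zero_or_pos n with rfl | hn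
    · simp
    rw [abs_of_nonneg ((hA ⟨0, hm⟩ ⟨0, hn⟩).trans (hc _ _))]
  calc kyFanR A k = ∑ i ∈ s, ⟪u i, toEuclideanLin A (v i)⟫ := by simp only [hky, huv]
    _ ≤ (|c| * √((m : ℝ) * n) + √(#s) * √(∑ p, ∑ q, (c - 2 * A p q) ^ 2)) / 2 := by
        simpa using sum_inner_toEuclideanLin_le hu hv s A c
    _ ≤ (|c| * √((m : ℝ) * n) + √k * (√((m : ℝ) * n) * |c|)) / 2 := by gcongr
    _ = (1 + √k) * (√((m : ℝ) * n) * |c|) / 2 := by ring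
    _ = (1 + Real.sqrt k) * Real.sqrt ((m : ℝ) * n) * c / 2 := by rw [habs]; ring

/-- Ky Fan norm of a nonnegative matrix with entries at most `c`:
`‖A‖_{F_k} ≤ (1 + √k)√(mn) c / 2`. -/
theorem kyFan_le_nonneg {m n k : ℕ} (hk : 1 ≤ k) (hkm : k ≤ m) (hmn : m ≤ n)
    (A : Matrix (Fin m) (Fin n) ℝ) (c : ℝ) (hA : ∀ i j, 0 ≤ A i j) (hc : ∀ i j, A i j ≤ c) :
    kyFanR A k ≤ (1 + Real.sqrt k) * Real.sqrt ((m : ℝ) * n) * c / 2 :=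
  kyFan_le_nonneg_general A c hA hc
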